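/- Let D be a chord diagram containing a weak RII pair α = {i, j}, β = {i+1, j+1} (where i, i+1, j, j+1 are distinct points in this cyclic order), let D' be obtained from D by deleting α and β, and let k be the number of chords other than β crossing α. Then T(D) ≡ T(D') + k (mod 2); in particular, if D is evenly interlaced then T(D) − T(D') is odd. (This is the paper's claim that one weak RII move changes the triple-chord count by an odd number.) -/

import Mathlib

/-- A chord diagram on `2 * n` points: a fixed-point-free involution of `ZMod (2 * n)`.
Its two-element orbits are called chords; the points lie on a circle in their
natural cyclic order. -/
structure ChordDiagram (n : ℕ) where
  inv : ZMod (2 * n) → ZMod (2 * n)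
  involutive : Function.Involutive inv
  fixedPointFree : ∀ x, inv x ≠ x

/-- A chord: an unordered pair of points of the circle `ZMod m`. -/
abbrev Chord (m : ℕ) := Sym2 (ZMod m)

/-- `x` lies in the open cyclic arc running counterclockwise from `a` to `b`. -/
def InArc {m : ℕ} (a b x : ZMod m) : Prop :=
  0 < (x - a).val ∧ (x - a).val < (b - a).val

/-- Two chords cross: exactly one endpoint of the second lies in the open cyclic arc
bounded by the first. -/
def Chord.Crosses {m : ℕ} (e f : Chord m) : Prop :=
  ∃ a b c d : ZMod m, e = s(a, b) ∧ f = s(c, d) ∧ Xor' (InArc a b c) (InArc a b d)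

/-- The set of chords of a chord diagram. -/
def ChordDiagram.chords {n : ℕ} (D : ChordDiagram n) : Set (Chord (2 * n)) :=
  {e | ∃ x, e = s(x, D.inv x)}

/-- `P` is an (unordered) pair of crossing chords of `D`. -/
def ChordDiagram.IsCrossingPair {n : ℕ} (D : ChordDiagram n)
    (P : Finset (Chord (2 * n))) : Prop :=
  P.card = 2 ∧ (∀ e ∈ P, e ∈ D.chords) ∧
    ∀ e ∈ P, ∀ f ∈ P, e ≠ f → Chord.Crosses e f

/-- `P` is an (unordered) triple of pairwise crossing chords of `D`. -/
def ChordDiagram.IsTripleChord {n : ℕ} (D : ChordDiagram n)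
    (P : Finset (Chord (2 * n))) : Prop :=
  P.card = 3 ∧ (∀ e ∈ P, e ∈ D.chords) ∧
    ∀ e ∈ P, ∀ f ∈ P, e ≠ f → Chord.Crosses e f

/-- `P` is an H-triple of `D`: a triple `{a, b, c}` of chords of `D` such that `c`
crosses both `a` and `b` while `a` and `b` do not cross. -/
def ChordDiagram.IsHTriple {n : ℕ} (D : ChordDiagram n)
    (P : Finset (Chord (2 * n))) : Prop :=
  P.card = 3 ∧ (∀ e ∈ P, e ∈ D.chords) ∧
    ∃ c ∈ P, (∀ e ∈ P, e ≠ c → Chord.Crosses c e) ∧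
      ∀ a ∈ P, ∀ b ∈ P, a ≠ c → b ≠ c → a ≠ b → ¬ Chord.Crosses a b

/-- `X D`: the number of unordered pairs of chords of `D` that cross. -/
noncomputable def ChordDiagram.X {n : ℕ} (D : ChordDiagram n) : ℕ :=
  Set.ncard {P | D.IsCrossingPair P}

/-- `T D`: the number of unordered triples of chords of `D` that pairwise cross. -/
noncomputable def ChordDiagram.T {n : ℕ} (D : ChordDiagram n) : ℕ :=
  Set.ncard {P | D.IsTripleChord P}

/-- `H D`: the number of H-triples of `D`. -/
noncomputable def ChordDiagram.H {n : ℕ} (D : ChordDiagram n) : ℕ :=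
  Set.ncard {P | D.IsHTriple P}

/-- `D'` is obtained from `D` by deleting the set `S` of chords: deletion removes the
chords of `S` together with their endpoints and reindexes the remaining points
preserving their cyclic order; in particular it induces a bijection between the
remaining chords of `D` and the chords of `D'` preserving all crossing relations. -/
def ChordDiagram.DeletionOf {n n' : ℕ} (D : ChordDiagram n) (S : Set (Chord (2 * n)))
    (D' : ChordDiagram n') : Prop :=
  ∃ φ : {e : Chord (2 * n) // e ∈ D.chords ∧ e ∉ S} ≃
      {e : Chord (2 * n') // e ∈ D'.chords},
    ∀ e f, Chord.Crosses e.1 f.1 ↔ Chord.Crosses (φ e).1 (φ f).1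

/-- Four points occurring in this (strict counterclockwise) cyclic order;
in particular they are pairwise distinct. -/
def CyclicOrd4 {m : ℕ} (a b c d : ZMod m) : Prop :=
  0 < (b - a).val ∧ (b - a).val < (c - a).val ∧ (c - a).val < (d - a).val

/-- Six points occurring in this (strict counterclockwise) cyclic order;
in particular they are pairwise distinct. -/
def CyclicOrd6 {m : ℕ} (a b c d e f : ZMod m) : Prop :=
  0 < (b - a).val ∧ (b - a).val < (c - a).val ∧ (c - a).val < (d - a).val ∧
    (d - a).val < (e - a).val ∧ (e - a).val < (f - a).val

/-- `D` is evenly interlaced: every chord of `D` crosses an even number of chords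
of `D` (true for the Gauss diagram of every knot projection). -/
def ChordDiagram.EvenlyInterlaced {n : ℕ} (D : ChordDiagram n) : Prop :=
  ∀ e ∈ D.chords, Even (Set.ncard {f | f ∈ D.chords ∧ Chord.Crosses e f})

/-- Exactly two of the three propositions hold. -/
def ExactlyTwo (A B C : Prop) : Prop :=
  (A ∧ B ∧ ¬ C) ∨ (A ∧ ¬ B ∧ C) ∨ (¬ A ∧ B ∧ C)

/-- A strong RIII move: the three pairwise crossing chords `{p, q+1}`, `{q, r+1}`,
`{r, p+1}` (where `p, p+1, q, q+1, r, r+1` occur in this cyclic order) are replaced by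
the three chords `{p+1, q}`, `{q+1, r}`, `{r+1, p}`, all other chords being unchanged. -/
def ChordDiagram.StrongRIII {n : ℕ} (D D' : ChordDiagram n) : Prop :=
  ∃ p q r : ZMod (2 * n), CyclicOrd6 p (p + 1) q (q + 1) r (r + 1) ∧
    s(p, q + 1) ∈ D.chords ∧ s(q, r + 1) ∈ D.chords ∧ s(r, p + 1) ∈ D.chords ∧
    D'.chords = (D.chords \ {s(p, q + 1), s(q, r + 1), s(r, p + 1)}) ∪
      {s(p + 1, q), s(q + 1, r), s(r + 1, p)}

/-!
Split the pairwise crossing triples of `D` according to which of `α = {i, j}` and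
`β = {i+1, j+1}` they contain. The triples avoiding both are the triples of `D'`. As the
endpoints of `α` and `β` are adjacent on the circle, every other chord crosses `α` iff it
crosses `β`; so exchanging `α` and `β` matches the `N` triples through `α` only with those
through `β` only. The triples through both are `{α, β, γ}` with `γ` crossing `α`, and there
are `k` of them. Hence `T(D) = T(D') + 2 N + k`. If `D` is evenly interlaced, the chords
crossing `α` are `β` and those `k` chords, so `k` is odd.
-/

section Triangles

variable {γ δ : Type*}

def triangles (C : Set γ) (R : γ → γ → Prop) : Set (Finset γ) :=
  {P | P.card = 3 ∧ (∀ e ∈ P, e ∈ C) ∧ ∀ e ∈ P, ∀ f ∈ P, e ≠ f → R e f}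

theorem ncard_triangles_image {f : γ → δ} (hf : f.Injective) (C : Set γ)
    {R : γ → γ → Prop} {R' : δ → δ → Prop} (hR : ∀ x y, R x y ↔ R' (f x) (f y)) :
    (triangles (f '' C) R').ncard = (triangles C R).ncard := by
  classical
  suffices triangles (f '' C) R' = Finset.image f '' triangles C R by
    rw [this, Set.ncard_image_of_injective _ (Finset.image_injective hf)]
  ext Q
  constructor
  · rintro ⟨hcard, hmem, hQ⟩
    obtain ⟨P, hPC, rfl⟩ := Finset.subset_set_image_iff.mp fun x hx => hmem x hx
    refine ⟨P, ⟨?_, fun x hx => hPC hx, fun x hx y hy hxy => ?_⟩, rfl⟩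
    · rwa [Finset.card_image_of_injective _ hf] at hcard
    · exact (hR x y).mpr (hQ _ (Finset.mem_image_of_mem f hx) _
        (Finset.mem_image_of_mem f hy) (hf.ne hxy))
  · rintro ⟨P, ⟨hcard, hPC, hP⟩, rfl⟩
    refine ⟨by rwa [Finset.card_image_of_injective _ hf], ?_, ?_⟩
    · simp only [Finset.forall_mem_image]
      exact fun x hx => Set.mem_image_of_mem f (hPC x hx)
    · simp only [Finset.forall_mem_image]
      exact fun x hx y hy hxy => (hR x y).mp (hP x hx y hy (ne_of_apply_ne f hxy))

theorem triangles_sdiff_pair (C : Set γ) (R : γ → γ → Prop) (a b : γ) :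
    triangles (C \ {a, b}) R = (triangles C R \ {P | a ∈ P}) \ {P | b ∈ P} := by
  ext P
  simp only [triangles, Set.mem_sdiff, Set.mem_insert_iff, Set.mem_singleton_iff,
    Set.mem_ofPred_eq]
  constructor
  · rintro ⟨hcard, hmem, hP⟩
    exact ⟨⟨⟨hcard, fun e he => (hmem e he).1, hP⟩, fun ha => (hmem a ha).2 (Or.inl rfl)⟩,
      fun hb => (hmem b hb).2 (Or.inr rfl)⟩
  · rintro ⟨⟨⟨hcard, hmem, hP⟩, ha⟩, hb⟩
    refine ⟨hcard, fun e he => ⟨hmem e he, ?_⟩, hP⟩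
    rintro (rfl | rfl) <;> contradiction

variable {C : Set γ} {R : γ → γ → Prop} {a b : γ}

theorem ncard_triangles_swap_le [Finite γ] (hsymm : ∀ e ∈ C, ∀ f ∈ C, R e f → R f e)
    (hb : b ∈ C) (htwin : ∀ e ∈ C, e ≠ a → e ≠ b → (R e a ↔ R e b)) :
    ((triangles C R ∩ {P | a ∈ P}) \ {P | b ∈ P}).ncard ≤
      ((triangles C R ∩ {P | b ∈ P}) \ {P | a ∈ P}).ncard := by
  classical
  refine Set.ncard_le_ncard_of_injOn (fun P => insert b (P.erase a)) ?_ ?_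
  · rintro P ⟨⟨⟨hcard, hmem, hP⟩, haP⟩, hbP⟩
    have hab : a ≠ b := fun h => hbP (h ▸ haP)
    have hb' : b ∉ P.erase a := fun h => hbP (Finset.mem_of_mem_erase h)
    refine ⟨⟨⟨?_, ?_, ?_⟩, Finset.mem_insert_self _ _⟩, ?_⟩
    · rw [Finset.card_insert_of_notMem hb', Finset.card_erase_of_mem haP, hcard]
    · simp only [Finset.forall_mem_insert]
      exact ⟨hb, fun e he => hmem e (Finset.mem_of_mem_erase he)⟩
    · have hRb : ∀ e ∈ P.erase a, R e b := fun e he => by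
        obtain ⟨hea, heP⟩ := Finset.mem_erase.mp he
        exact (htwin e (hmem e heP) hea (fun h => hbP (h ▸ heP))).mp
          (hP e heP a haP hea)
      intro e he f hf hef
      rcases Finset.mem_insert.mp he with he | he <;>
        rcases Finset.mem_insert.mp hf with hf | hf
      · exact absurd (he.trans hf.symm) hef
      · rw [he]; exact hsymm f (hmem f (Finset.mem_of_mem_erase hf)) b hb (hRb f hf)
      · rw [hf]; exact hRb e he
      · exact hP e (Finset.mem_of_mem_erase he) f (Finset.mem_of_mem_erase hf) hef
    · simp [hab]
  · rintro P ⟨⟨-, haP⟩, hbP⟩ Q ⟨⟨-, haQ⟩, hbQ⟩ hPQ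
    have key : ∀ S : Finset γ, a ∈ S → b ∉ S → insert a ((insert b (S.erase a)).erase b) = S :=
      fun S haS hbS => by
        rw [Finset.erase_insert fun h => hbS (Finset.mem_of_mem_erase h),
          Finset.insert_erase haS]
    rw [← key P haP hbP, ← key Q haQ hbQ]
    exact congrArg (fun S => insert a (S.erase b)) hPQ

theorem ncard_triangles_mem_mem (hsymm : ∀ e ∈ C, ∀ f ∈ C, R e f → R f e)
    (hirr : ¬ R a a) (ha : a ∈ C) (hb : b ∈ C) (hab : R a b)
    (htwin : ∀ e ∈ C, e ≠ a → e ≠ b → (R e a ↔ R e b)) :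
    (triangles C R ∩ {P | a ∈ P} ∩ {P | b ∈ P}).ncard = {e | e ∈ C ∧ e ≠ b ∧ R e a}.ncard := by
  classical
  have hne : a ≠ b := fun h => hirr (h ▸ hab)
  symm
  refine Set.ncard_congr (fun e _ => {a, b, e}) ?_ ?_ ?_
  · rintro e ⟨heC, heb, hea⟩
    have hea' : e ≠ a := fun h => hirr (h ▸ hea)
    have heb' : R e b := (htwin e heC hea' heb).mp hea
    refine ⟨⟨⟨Finset.card_eq_three.mpr ⟨a, b, e, hne, hea'.symm, heb.symm, rfl⟩, ?_, ?_⟩,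
      by simp⟩, by simp⟩
    · simp only [Finset.mem_insert, Finset.mem_singleton]
      rintro f (rfl | rfl | rfl) <;> assumption
    · simp only [Finset.mem_insert, Finset.mem_singleton]
      rintro x (rfl | rfl | rfl) y (rfl | rfl | rfl) hxy <;> first
        | exact absurd rfl hxy | assumption | exact hsymm _ ‹_› _ ‹_› ‹_›
  · rintro e f ⟨-, heb, hea⟩ - hef
    have hea' : e ≠ a := fun h => hirr (h ▸ hea)
    have : e ∈ ({a, b, f} : Finset γ) := hef ▸ by simp
    simpa [hea', heb] using this
  · rintro P ⟨⟨⟨hcard, hmem, hP⟩, haP⟩, hbP⟩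
    obtain ⟨e, heP, he⟩ := Finset.exists_mem_notMem_of_card_lt_card
      (s := {a, b}) (t := P) (by rw [hcard]; exact (Finset.card_le_two).trans_lt (by norm_num))
    simp only [Finset.mem_insert, Finset.mem_singleton, not_or] at he
    refine ⟨e, ⟨hmem e heP, he.2, hP e heP a haP he.1⟩, ?_⟩
    refine Finset.eq_of_subset_of_card_le ?_ ?_
    · simp only [Finset.insert_subset_iff, Finset.singleton_subset_iff]
      exact ⟨haP, hbP, heP⟩
    · rw [hcard, Finset.card_eq_three.mpr ⟨a, b, e, hne, Ne.symm he.1, Ne.symm he.2, rfl⟩]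

theorem ncard_triangles_of_twins [Finite γ] (hsymm : ∀ e ∈ C, ∀ f ∈ C, R e f → R f e)
    (hirr : ¬ R a a) (ha : a ∈ C) (hb : b ∈ C) (hab : R a b)
    (htwin : ∀ e ∈ C, e ≠ a → e ≠ b → (R e a ↔ R e b)) :
    (triangles C R).ncard = (triangles (C \ {a, b}) R).ncard +
      2 * ((triangles C R ∩ {P | a ∈ P}) \ {P | b ∈ P}).ncard +
      {e | e ∈ C ∧ e ≠ b ∧ R e a}.ncard := by
  have hswap : ((triangles C R ∩ {P | a ∈ P}) \ {P | b ∈ P}).ncard =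
      ((triangles C R ∩ {P | b ∈ P}) \ {P | a ∈ P}).ncard :=
    le_antisymm (ncard_triangles_swap_le hsymm hb htwin)
      (ncard_triangles_swap_le hsymm ha fun e he hea heb => (htwin e he heb hea).symm)
  rw [← Set.ncard_inter_add_ncard_sdiff_eq_ncard (triangles C R) {P | a ∈ P},
    ← Set.ncard_inter_add_ncard_sdiff_eq_ncard (triangles C R ∩ {P | a ∈ P}) {P | b ∈ P},
    ← Set.ncard_inter_add_ncard_sdiff_eq_ncard (triangles C R \ {P | a ∈ P}) {P | b ∈ P},
    Set.sdiff_inter_right_comm, ← hswap, ncard_triangles_mem_mem hsymm hirr ha hb hab htwin,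
    triangles_sdiff_pair]
  ring

theorem ncard_setOf_rel_eq_add_one [Finite γ] (hsymm : ∀ e ∈ C, ∀ f ∈ C, R e f → R f e)
    (ha : a ∈ C) (hb : b ∈ C) (hab : R a b) :
    {f | f ∈ C ∧ R a f}.ncard = {e | e ∈ C ∧ e ≠ b ∧ R e a}.ncard + 1 := by
  have : {f | f ∈ C ∧ R a f} = insert b {e | e ∈ C ∧ e ≠ b ∧ R e a} := by
    ext f
    simp only [Set.mem_ofPred_eq, Set.mem_insert_iff]
    constructor
    · rintro ⟨hf, hRf⟩
      by_cases hfb : f = b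
      · exact Or.inl hfb
      · exact Or.inr ⟨hf, hfb, hsymm a ha f hf hRf⟩
    · rintro (rfl | ⟨hf, -, hRf⟩)
      · exact ⟨hb, hab⟩
      · exact ⟨hf, hsymm f hf a ha hRf⟩
  rw [this, Set.ncard_insert_of_notMem fun h => h.2.1 rfl]

end Triangles

namespace ZMod

variable {m : ℕ} [NeZero m]

theorem val_sub_ne_val_sub {u v : ZMod m} (a : ZMod m) (h : u ≠ v) :
    (u - a).val ≠ (v - a).val :=
  fun hval => h (sub_left_injective (val_injective m hval))

theorem val_sub_eq_ite (u v : ZMod m) :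
    (u - v).val = if v.val ≤ u.val then u.val - v.val else u.val + m - v.val := by
  split_ifs with h
  · exact val_sub h
  · have hle : m ≤ (u - v).val + v.val := by
      by_contra hlt
      have := val_add_of_lt (a := u - v) (b := v) (by omega)
      rw [sub_add_cancel] at this
      omega
    have := val_add_val_of_le hle
    rw [sub_add_cancel] at this
    omega

theorem val_add_one_of_ne_zero {x : ZMod m} (h : x + 1 ≠ 0) : (x + 1).val = x.val + 1 := by
  rcases eq_or_ne m 1 with rfl | hm
  · exact absurd (Subsingleton.elim _ _) h
  have : Fact (1 < m) := ⟨by have := NeZero.pos m; omega⟩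
  have hx := val_lt x
  have hne : x.val + 1 ≠ m := fun heq => h <| by
    rw [← val_eq_zero, val_add, val_one, heq, Nat.mod_self]
  rw [val_add_of_lt (by rw [val_one]; omega), val_one]

end ZMod

section InArc

variable {m : ℕ} [NeZero m] {a b c d x : ZMod m}

theorem inArc_swap_iff_not (hab : a ≠ b) (hxa : x ≠ a) (hxb : x ≠ b) :
    InArc b a x ↔ ¬ InArc a b x := by
  have hx : x - b = (x - a) - (b - a) := by ring
  have ha : a - b = 0 - (b - a) := by ring
  have hxa' := (ZMod.val_ne_zero _).mpr (sub_ne_zero.mpr hxa)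
  have hba' := (ZMod.val_ne_zero _).mpr (sub_ne_zero.mpr hab.symm)
  have hxb' := ZMod.val_sub_ne_val_sub a hxb
  have := ZMod.val_lt (x - a)
  have := ZMod.val_lt (b - a)
  simp only [InArc, hx, ha]
  rw [ZMod.val_sub_eq_ite (x - a), ZMod.val_sub_eq_ite 0, ZMod.val_zero]
  split_ifs <;> omega

theorem xor_inArc_comm (hab : a ≠ b) (hac : a ≠ c) (had : a ≠ d) (hbc : b ≠ c) (hbd : b ≠ d)
    (hcd : c ≠ d) :
    Xor (InArc a b c) (InArc a b d) ↔ Xor (InArc c d a) (InArc c d b) := by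
  have ha : a - c = 0 - (c - a) := by ring
  have hb : b - c = (b - a) - (c - a) := by ring
  have hd : d - c = (d - a) - (c - a) := by ring
  have hba' := (ZMod.val_ne_zero _).mpr (sub_ne_zero.mpr hab.symm)
  have hca' := (ZMod.val_ne_zero _).mpr (sub_ne_zero.mpr hac.symm)
  have hda' := (ZMod.val_ne_zero _).mpr (sub_ne_zero.mpr had.symm)
  have hbc' := ZMod.val_sub_ne_val_sub a hbc
  have hbd' := ZMod.val_sub_ne_val_sub a hbd
  have hcd' := ZMod.val_sub_ne_val_sub a hcd
  have := ZMod.val_lt (b - a)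
  have := ZMod.val_lt (c - a)
  have := ZMod.val_lt (d - a)
  simp only [InArc, xor_def, ha, hb, hd]
  rw [ZMod.val_sub_eq_ite 0, ZMod.val_sub_eq_ite (b - a), ZMod.val_sub_eq_ite (d - a),
    ZMod.val_zero]
  split_ifs <;> omega

theorem inArc_add_one_iff (hxc : x ≠ c) (hxd : x ≠ d) (hx1c : x + 1 ≠ c) (hx1d : x + 1 ≠ d) :
    InArc c d (x + 1) ↔ InArc c d x := by
  have hx1 : x + 1 - c = (x - c) + 1 := by ring
  have hval : ((x - c) + 1).val = (x - c).val + 1 :=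
    ZMod.val_add_one_of_ne_zero (by rw [← hx1]; exact sub_ne_zero.mpr hx1c)
  have hxc' := (ZMod.val_ne_zero _).mpr (sub_ne_zero.mpr hxc)
  have hxd' := ZMod.val_sub_ne_val_sub c hxd
  have hx1d' := ZMod.val_sub_ne_val_sub c hx1d
  rw [hx1, hval] at hx1d'
  simp only [InArc, hx1, hval]
  omega

end InArc

theorem CyclicOrd4.crosses {m : ℕ} {a b c d : ZMod m} (h : CyclicOrd4 a b c d) :
    Chord.Crosses s(a, c) s(b, d) :=
  ⟨a, c, b, d, rfl, rfl, Or.inl ⟨⟨h.1, h.2.1⟩, fun hd => absurd hd.2 (by have := h.2.2; omega)⟩⟩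

namespace Chord

variable {m : ℕ}

theorem not_crosses_self (e : Chord m) : ¬ e.Crosses e := by
  rintro ⟨a, b, c, d, rfl, hcd, hx⟩
  have ha : ¬ InArc a b a := by simp [InArc]
  have hb : ¬ InArc a b b := fun h => lt_irrefl _ h.2
  rcases Sym2.eq_iff.mp hcd with ⟨rfl, rfl⟩ | ⟨rfl, rfl⟩ <;>
    rcases Xor.or hx with h | h <;> contradiction

variable [NeZero m]

theorem crosses_mk_iff {a b c d : ZMod m} (hab : a ≠ b) (hc : c ∉ s(a, b)) (hd : d ∉ s(a, b)) :
    Chord.Crosses s(a, b) s(c, d) ↔ Xor (InArc a b c) (InArc a b d) := by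
  simp only [Sym2.mem_iff, not_or] at hc hd
  refine ⟨?_, fun h => ⟨a, b, c, d, rfl, rfl, h⟩⟩
  rintro ⟨a', b', c', d', hab', hcd', hx⟩
  have hswap : Xor (InArc b a c) (InArc b a d) ↔ Xor (InArc a b c) (InArc a b d) := by
    rw [inArc_swap_iff_not hab hc.1 hc.2, inArc_swap_iff_not hab hd.1 hd.2, xor_not_not]
  rcases Sym2.eq_iff.mp hab' with ⟨rfl, rfl⟩ | ⟨rfl, rfl⟩ <;>
    rcases Sym2.eq_iff.mp hcd' with ⟨rfl, rfl⟩ | ⟨rfl, rfl⟩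
  · exact hx
  · rwa [xor_comm]
  · exact hswap.mp hx
  · exact hswap.mp (by rwa [xor_comm])

theorem crosses_mk_comm {a b c d : ZMod m} (hab : a ≠ b) (hcd : c ≠ d) (hc : c ∉ s(a, b))
    (hd : d ∉ s(a, b)) : Chord.Crosses s(a, b) s(c, d) ↔ Chord.Crosses s(c, d) s(a, b) := by
  rw [crosses_mk_iff hab hc hd]
  simp only [Sym2.mem_iff, not_or] at hc hd
  have ha : a ∉ s(c, d) := by
    simp only [Sym2.mem_iff, not_or]; exact ⟨Ne.symm hc.1, Ne.symm hd.1⟩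
  have hb : b ∉ s(c, d) := by
    simp only [Sym2.mem_iff, not_or]; exact ⟨Ne.symm hc.2, Ne.symm hd.2⟩
  rw [crosses_mk_iff hcd ha hb]
  exact xor_inArc_comm hab (Ne.symm hc.1) (Ne.symm hd.1) (Ne.symm hc.2) (Ne.symm hd.2) hcd

theorem crosses_mk_add_one_iff {c d x y : ZMod m} (hcd : c ≠ d) (hx : x ∉ s(c, d))
    (hy : y ∉ s(c, d)) (hx1 : x + 1 ∉ s(c, d)) (hy1 : y + 1 ∉ s(c, d)) :
    Chord.Crosses s(c, d) s(x, y) ↔ Chord.Crosses s(c, d) s(x + 1, y + 1) := by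
  rw [crosses_mk_iff hcd hx hy, crosses_mk_iff hcd hx1 hy1]
  simp only [Sym2.mem_iff, not_or] at hx hy hx1 hy1
  rw [inArc_add_one_iff hx.1 hx.2 hx1.1 hx1.2, inArc_add_one_iff hy.1 hy.2 hy1.1 hy1.2]

end Chord

namespace ChordDiagram

variable {n : ℕ} (D : ChordDiagram n)

theorem T_eq_ncard_triangles : D.T = (triangles D.chords Chord.Crosses).ncard := rfl

theorem eq_mk_inv_of_mem {e : Chord (2 * n)} (he : e ∈ D.chords) {x : ZMod (2 * n)}
    (hx : x ∈ e) : e = s(x, D.inv x) := by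
  obtain ⟨y, rfl⟩ := he
  rcases Sym2.mem_iff.mp hx with rfl | rfl
  · rfl
  · rw [D.involutive]; exact Sym2.eq_swap

theorem notMem_of_mem_of_ne {e f : Chord (2 * n)} (he : e ∈ D.chords) (hf : f ∈ D.chords)
    (hef : e ≠ f) ⦃x : ZMod (2 * n)⦄ (hx : x ∈ e) : x ∉ f :=
  fun hxf => hef ((D.eq_mk_inv_of_mem he hx).trans (D.eq_mk_inv_of_mem hf hxf).symm)

variable [NeZero (2 * n)]

theorem crosses_comm {e f : Chord (2 * n)} (he : e ∈ D.chords) (hf : f ∈ D.chords) :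
    e.Crosses f ↔ f.Crosses e := by
  rcases eq_or_ne e f with rfl | hef
  · rfl
  obtain ⟨a, rfl⟩ := he
  obtain ⟨c, rfl⟩ := hf
  have hdisj := D.notMem_of_mem_of_ne ⟨c, rfl⟩ ⟨a, rfl⟩ hef.symm
  exact Chord.crosses_mk_comm (D.fixedPointFree a).symm (D.fixedPointFree c).symm
    (hdisj (Sym2.mem_mk_left _ _)) (hdisj (Sym2.mem_mk_right _ _))

theorem crosses_iff_crosses_add_one {i j : ZMod (2 * n)} (hα : s(i, j) ∈ D.chords)
    (hβ : s(i + 1, j + 1) ∈ D.chords) {e : Chord (2 * n)} (he : e ∈ D.chords)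
    (heα : e ≠ s(i, j)) (heβ : e ≠ s(i + 1, j + 1)) :
    e.Crosses s(i, j) ↔ e.Crosses s(i + 1, j + 1) := by
  obtain ⟨c, rfl⟩ := he
  have hα' := D.notMem_of_mem_of_ne hα ⟨c, rfl⟩ heα.symm
  have hβ' := D.notMem_of_mem_of_ne hβ ⟨c, rfl⟩ heβ.symm
  exact Chord.crosses_mk_add_one_iff (D.fixedPointFree c).symm (hα' (Sym2.mem_mk_left _ _))
    (hα' (Sym2.mem_mk_right _ _)) (hβ' (Sym2.mem_mk_left _ _)) (hβ' (Sym2.mem_mk_right _ _))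

end ChordDiagram

theorem ChordDiagram.DeletionOf.T_eq {n n' : ℕ} {D : ChordDiagram n} {S : Set (Chord (2 * n))}
    {D' : ChordDiagram n'} (h : D.DeletionOf S D') :
    D'.T = (triangles (D.chords \ S) Chord.Crosses).ncard := by
  obtain ⟨φ, hφ⟩ := h
  have hD : D.chords \ S = Subtype.val '' (Set.univ : Set {e // e ∈ D.chords ∧ e ∉ S}) := by
    rw [Set.image_univ, Subtype.range_coe_subtype]
    rfl
  have hD' : D'.chords = Subtype.val '' (φ '' Set.univ) := by
    rw [Set.image_univ_of_surjective φ.surjective, Set.image_univ, Subtype.range_coe]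
  rw [ChordDiagram.T_eq_ncard_triangles, hD', hD,
    ncard_triangles_image Subtype.val_injective _ (R := fun e f => Chord.Crosses e.1 f.1)
      fun _ _ => Iff.rfl,
    ncard_triangles_image Subtype.val_injective _ (R := fun e f => Chord.Crosses e.1 f.1)
      fun _ _ => Iff.rfl,
    ncard_triangles_image φ.injective _ (R := fun e f => Chord.Crosses e.1 f.1) hφ]

/-- deleting a weak RII pair `α = {i, j}`, `β = {i+1, j+1}` changes the
triple-chord count `T` by `k` modulo 2, where `k` is the number of chords other than
`β` crossing `α`; in particular if `D` is evenly interlaced then `T(D) − T(D')` is odd. -/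
theorem weak_RII_changes_T_by_odd (n : ℕ) (D : ChordDiagram (n + 2)) (D' : ChordDiagram n)
    (i j : ZMod (2 * (n + 2)))
    (hord : CyclicOrd4 i (i + 1) j (j + 1))
    (hα : s(i, j) ∈ D.chords) (hβ : s(i + 1, j + 1) ∈ D.chords)
    (hdel : D.DeletionOf {s(i, j), s(i + 1, j + 1)} D')
    (k : ℕ)
    (hk : k = Set.ncard {e | e ∈ D.chords ∧ e ≠ s(i + 1, j + 1) ∧ Chord.Crosses e s(i, j)}) :
    D.T ≡ D'.T + k [MOD 2] ∧
      (D.EvenlyInterlaced → Odd ((D.T : ℤ) - (D'.T : ℤ))) := by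
  have hsymm : ∀ e ∈ D.chords, ∀ f ∈ D.chords, e.Crosses f → f.Crosses e :=
    fun e he f hf => (D.crosses_comm he hf).mp
  have hcount := ncard_triangles_of_twins hsymm (Chord.not_crosses_self _) hα hβ hord.crosses
    fun e he heα heβ => D.crosses_iff_crosses_add_one hα hβ he heα heβ
  rw [← D.T_eq_ncard_triangles, ← hdel.T_eq, ← hk] at hcount
  refine ⟨by rw [hcount, Nat.ModEq]; omega, fun hEI => ?_⟩
  obtain ⟨t, ht⟩ : Even (k + 1) := by
    rw [hk, ← ncard_setOf_rel_eq_add_one hsymm hα hβ hord.crosses]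
    exact hEI _ hα
  rw [Int.odd_iff]
  omega
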